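/- For n ≥ 2, M(n, I_2) = n² − n, and the unique n×n strongly I_2-forcing (0,1)-matrix with n² − n 1-entries is J_n − H_n. -/

import Mathlib

open Finset

/-- Number of 1-entries of a (0,1)-matrix. -/
def onesCount {m n : ℕ} (A : Fin m → Fin n → Bool) : ℕ :=
  (Finset.univ.filter (fun p : Fin m × Fin n => A p.1 p.2 = true)).card

/-- Number of 0-entries of a (0,1)-matrix. -/
def zerosCount {m n : ℕ} (A : Fin m → Fin n → Bool) : ℕ :=
  (Finset.univ.filter (fun p : Fin m × Fin n => A p.1 p.2 = false)).card

/-- `A` is `Q`-forcing: every s×t submatrix of `A` is entrywise ≥ Q. -/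
def IsForcing {m n s t : ℕ} (A : Fin m → Fin n → Bool) (Q : Fin s → Fin t → Bool) : Prop :=
  ∀ (r : Fin s → Fin m) (c : Fin t → Fin n), StrictMono r → StrictMono c →
    ∀ y x, Q y x = true → A (r y) (c x) = true

/-- Minimum number of 1-entries of an m×n Q-forcing matrix. -/
noncomputable def mMin (m n : ℕ) {s t : ℕ} (Q : Fin s → Fin t → Bool) : ℕ :=
  sInf {v | ∃ A : Fin m → Fin n → Bool, IsForcing A Q ∧ onesCount A = v}

/-- `A` is strongly `Q`-forcing: every 1-entry lies in a submatrix exactly equal to `Q`. -/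
def IsStronglyForcing {m n s t : ℕ} (A : Fin m → Fin n → Bool)
    (Q : Fin s → Fin t → Bool) : Prop :=
  ∀ i j, A i j = true → ∃ (r : Fin s → Fin m) (c : Fin t → Fin n),
    StrictMono r ∧ StrictMono c ∧ (∀ y x, A (r y) (c x) = Q y x) ∧
    ∃ y x, r y = i ∧ c x = j

/-- Maximum number of 1-entries of an m×n strongly Q-forcing matrix. -/
noncomputable def MMax (m n : ℕ) {s t : ℕ} (Q : Fin s → Fin t → Bool) : ℕ :=
  sSup {v | ∃ A : Fin m → Fin n → Bool, IsStronglyForcing A Q ∧ onesCount A = v}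

/-- Corner sets of 0-positions with no 1-entry weakly in the given quadrant direction. -/
def cornerNW {s t : ℕ} (Q : Fin s → Fin t → Bool) : Finset (Fin s × Fin t) :=
  Finset.univ.filter (fun p => ∀ i' j', i' ≤ p.1 → j' ≤ p.2 → Q i' j' = false)

def cornerNE {s t : ℕ} (Q : Fin s → Fin t → Bool) : Finset (Fin s × Fin t) :=
  Finset.univ.filter (fun p => ∀ i' j', i' ≤ p.1 → p.2 ≤ j' → Q i' j' = false)

def cornerSW {s t : ℕ} (Q : Fin s → Fin t → Bool) : Finset (Fin s × Fin t) :=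
  Finset.univ.filter (fun p => ∀ i' j', p.1 ≤ i' → j' ≤ p.2 → Q i' j' = false)

def cornerSE {s t : ℕ} (Q : Fin s → Fin t → Bool) : Finset (Fin s × Fin t) :=
  Finset.univ.filter (fun p => ∀ i' j', p.1 ≤ i' → p.2 ≤ j' → Q i' j' = false)

/-- `P` is a permutation matrix. -/
def IsPermMatrix {k : ℕ} (P : Fin k → Fin k → Bool) : Prop :=
  ∃ σ : Equiv.Perm (Fin k), ∀ i j, P i j = decide (σ i = j)

/-! The off-diagonal entries of the `I₂` through a one are zeros in its row and in its column,
so every row of a strongly `I₂`-forcing `n × n` matrix has a zero and there are at most `n² - n`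
ones. In the extremal case row `i` has a single zero, at column `z i`, and `z` is a bijection.
For `i < k` the one at `(i, z k)` cannot be completed to an `I₂` towards the upper left, since
column `z k` has its zero in row `k`; towards the lower right it needs the zero of row `i` to
the right of `z k`. So `z` is strictly decreasing, that is, `z = rev`. Conversely, in `J_n - H_n`
a one at `(i, j)` and the one at `(rev j, rev i)` span an `I₂`. -/

local notation "I₂" => fun (i j : Fin 2) => decide (i = j)

def jMinusH (n : ℕ) : Fin n → Fin n → Bool := fun i j => decide ((i : ℕ) + (j : ℕ) ≠ n - 1)

lemma jMinusH_eq_false_iff {n : ℕ} (i j : Fin n) : jMinusH n i j = false ↔ j = i.rev := by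
  have := i.isLt
  simp only [jMinusH, decide_eq_false_iff_not, not_not, Fin.ext_iff, Fin.val_rev]
  omega

lemma Fin.eq_rev_of_strictAnti {n : ℕ} {f : Fin n → Fin n} (hf : StrictAnti f) :
    f = Fin.rev := by
  funext i
  simpa using congrFun (hf.comp Fin.rev_strictAnti).eq_id i.rev

lemma onesCount_add_zerosCount {m n : ℕ} (A : Fin m → Fin n → Bool) :
    onesCount A + zerosCount A = m * n := by
  simp only [onesCount, zerosCount, Bool.eq_false_iff]
  rw [Finset.card_filter_add_card_filter_not, Finset.card_univ, Fintype.card_prod,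
    Fintype.card_fin, Fintype.card_fin]

section Zeros

variable {m n : ℕ} {A : Fin m → Fin n → Bool} (z : Fin m → Fin n) (hz : ∀ i, A i (z i) = false)
include hz

lemma le_zerosCount_of_forall_eq_false : m ≤ zerosCount A := by
  simpa [zerosCount] using Finset.card_le_card_of_injOn (fun i => (i, z i)) (s := univ)
    (fun i _ => by simp [hz i]) (fun a _ b _ h => congrArg Prod.fst h)

lemma eq_false_iff_of_zerosCount_le (hcount : zerosCount A ≤ m) (i : Fin m) (j : Fin n) :
    A i j = false ↔ j = z i := by
  have hgraph : univ.image (fun i => (i, z i))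
      = univ.filter (fun p : Fin m × Fin n => A p.1 p.2 = false) := by
    refine Finset.eq_of_subset_of_card_le (fun p hp => ?_) ?_
    · obtain ⟨i, -, rfl⟩ := Finset.mem_image.1 hp
      simp [hz i]
    · rw [Finset.card_image_of_injective _ (fun a b h => congrArg Prod.fst h)]
      simpa [zerosCount] using hcount
  constructor
  · intro h
    have hmem : (i, j) ∈ univ.image (fun i => (i, z i)) := by simp [hgraph, h]
    obtain ⟨i', -, h'⟩ := Finset.mem_image.1 hmem
    cases h'
    rfl
  · rintro rfl
    exact hz i

end Zeros

lemma zerosCount_eq_of_eq_false_iff {m n : ℕ} {A : Fin m → Fin n → Bool} (z : Fin m → Fin n)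
    (hzero : ∀ i j, A i j = false ↔ j = z i) : zerosCount A = m := by
  have hgraph : univ.filter (fun p : Fin m × Fin n => A p.1 p.2 = false)
      = univ.image (fun i => (i, z i)) := by
    ext ⟨i, j⟩
    simp [hzero, eq_comm]
  rw [zerosCount, hgraph, Finset.card_image_of_injective _ (fun a b h => congrArg Prod.fst h),
    Finset.card_univ, Fintype.card_fin]

section StronglyForcingI2

variable {m n : ℕ} {A : Fin m → Fin n → Bool}

lemma strictMono_vecCons_two {α : Type*} [Preorder α] {a b : α} (h : a < b) :
    StrictMono ![a, b] :=
  Fin.strictMono_iff_lt_succ.2 fun i => by fin_cases i; simpa using h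

lemma submatrix_eq_I2 {a b : Fin m} {c d : Fin n} (hac : A a c = true) (had : A a d = false)
    (hbc : A b c = false) (hbd : A b d = true) (y x : Fin 2) :
    A (![a, b] y) (![c, d] x) = I₂ y x := by
  fin_cases y <;> fin_cases x <;> simp [*]

lemma isStronglyForcing_I2_iff :
    IsStronglyForcing A I₂ ↔ ∀ i j, A i j = true → ∃ i' j', (i < i' ∧ j < j' ∨ i' < i ∧ j' < j) ∧
      A i j' = false ∧ A i' j = false ∧ A i' j' = true := by
  constructor
  · intro hA i j hij
    obtain ⟨r, c, hr, hc, hrc, y, x, rfl, rfl⟩ := hA i j hij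
    have hyx : y = x := by simpa [hij] using (hrc y x).symm
    subst hyx
    have h01 : (0 : Fin 2) < 1 := Fin.zero_lt_one
    fin_cases y
    · exact ⟨r 1, c 1, .inl ⟨hr h01, hc h01⟩, by simpa using hrc 0 1, by simpa using hrc 1 0,
        by simpa using hrc 1 1⟩
    · exact ⟨r 0, c 0, .inr ⟨hr h01, hc h01⟩, by simpa using hrc 1 0, by simpa using hrc 0 1,
        by simpa using hrc 0 0⟩
  · intro hA i j hij
    obtain ⟨i', j', hord, h1, h2, h3⟩ := hA i j hij
    rcases hord with ⟨hi, hj⟩ | ⟨hi, hj⟩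
    · exact ⟨![i, i'], ![j, j'], strictMono_vecCons_two hi, strictMono_vecCons_two hj,
        submatrix_eq_I2 hij h1 h2 h3, 0, 0, rfl, rfl⟩
    · exact ⟨![i', i], ![j', j], strictMono_vecCons_two hi, strictMono_vecCons_two hj,
        submatrix_eq_I2 h3 h2 h1 hij, 1, 1, rfl, rfl⟩

variable (hA : IsStronglyForcing A I₂)
include hA

lemma exists_eq_false_in_row (i : Fin m) (j₀ : Fin n) : ∃ j, A i j = false := by
  cases h : A i j₀
  · exact ⟨j₀, h⟩
  · obtain ⟨-, j', -, hj', -⟩ := isStronglyForcing_I2_iff.1 hA i j₀ h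
    exact ⟨j', hj'⟩

lemma exists_eq_false_in_col (i₀ : Fin m) (j : Fin n) : ∃ i, A i j = false := by
  cases h : A i₀ j
  · exact ⟨i₀, h⟩
  · obtain ⟨i', -, -, -, hi', -⟩ := isStronglyForcing_I2_iff.1 hA i₀ j h
    exact ⟨i', hi'⟩

lemma strictAnti_of_eq_false_iff {z : Fin m → Fin n} (hzero : ∀ i j, A i j = false ↔ j = z i)
    (hz : Function.Injective z) : StrictAnti z := by
  intro i k hik
  have hone : A i (z k) = true := by
    rw [← Bool.not_eq_false, hzero]
    exact fun h => hik.ne (hz h).symm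
  obtain ⟨i', j', hord, hrow, hcol, -⟩ := isStronglyForcing_I2_iff.1 hA i (z k) hone
  rcases hord with ⟨-, hj'⟩ | ⟨hi', -⟩
  · rwa [(hzero i j').1 hrow] at hj'
  · cases hz ((hzero i' (z k)).1 hcol)
    exact absurd (hi'.trans hik) (lt_irrefl k)

end StronglyForcingI2

lemma isStronglyForcing_jMinusH (n : ℕ) : IsStronglyForcing (jMinusH n) I₂ := by
  refine isStronglyForcing_I2_iff.2 fun i j hij => ?_
  rw [← Bool.not_eq_false, jMinusH_eq_false_iff] at hij
  refine ⟨j.rev, i.rev, ?_, (jMinusH_eq_false_iff _ _).2 rfl,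
    (jMinusH_eq_false_iff _ _).2 (Fin.rev_rev j).symm, ?_⟩
  · rcases Ne.lt_or_gt hij with h | h
    · exact .inl ⟨Fin.lt_rev_iff.2 h, h⟩
    · exact .inr ⟨Fin.rev_lt_iff.2 h, h⟩
  · rwa [← Bool.not_eq_false, jMinusH_eq_false_iff, Fin.rev_rev, eq_comm]

lemma onesCount_jMinusH (n : ℕ) : onesCount (jMinusH n) = n ^ 2 - n := by
  have := onesCount_add_zerosCount (jMinusH n)
  rw [zerosCount_eq_of_eq_false_iff Fin.rev jMinusH_eq_false_iff] at this
  rw [sq]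
  omega

section Square

variable {n : ℕ} {A : Fin n → Fin n → Bool} (hA : IsStronglyForcing A I₂)
include hA

lemma onesCount_le_of_isStronglyForcing_I2 : onesCount A ≤ n ^ 2 - n := by
  choose z hz using fun i => exists_eq_false_in_row hA i i
  have := le_zerosCount_of_forall_eq_false z hz
  have := onesCount_add_zerosCount A
  rw [sq]
  omega

lemma eq_jMinusH_of_isStronglyForcing_I2 (hcount : onesCount A = n ^ 2 - n) : A = jMinusH n := by
  choose z hz using fun i => exists_eq_false_in_row hA i i
  have hzero : ∀ i j, A i j = false ↔ j = z i := by
    refine eq_false_iff_of_zerosCount_le z hz ?_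
    have := onesCount_add_zerosCount A
    have := Nat.le_mul_self n
    rw [sq] at hcount
    omega
  have hsurj : Function.Surjective z := fun j =>
    let ⟨i, hi⟩ := exists_eq_false_in_col hA j j
    ⟨i, ((hzero i j).1 hi).symm⟩
  have hrev : z = Fin.rev := Fin.eq_rev_of_strictAnti
    (strictAnti_of_eq_false_iff hA hzero (Finite.injective_iff_surjective.2 hsurj))
  funext i j
  rw [Bool.eq_iff_iff, ← Bool.not_eq_false, hzero, ← Bool.not_eq_false (jMinusH n i j),
    jMinusH_eq_false_iff, hrev]

end Square

theorem stmt13_general (n : ℕ) :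
    MMax n n (fun (i j : Fin 2) => decide (i = j)) = n ^ 2 - n ∧
    ∀ A : Fin n → Fin n → Bool,
      IsStronglyForcing A (fun (i j : Fin 2) => decide (i = j)) →
      onesCount A = n ^ 2 - n →
      A = fun (i j : Fin n) => decide ((i : ℕ) + (j : ℕ) ≠ n - 1) := by
  refine ⟨IsGreatest.csSup_eq ⟨⟨jMinusH n, isStronglyForcing_jMinusH n, onesCount_jMinusH n⟩, ?_⟩,
    fun A hA hcount => eq_jMinusH_of_isStronglyForcing_I2 hA hcount⟩
  rintro _ ⟨A, hA, rfl⟩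
  exact onesCount_le_of_isStronglyForcing_I2 hA

theorem stmt13 (n : ℕ) (hn : 2 ≤ n) :
    MMax n n (fun (i j : Fin 2) => decide (i = j)) = n ^ 2 - n ∧
    ∀ A : Fin n → Fin n → Bool,
      IsStronglyForcing A (fun (i j : Fin 2) => decide (i = j)) →
      onesCount A = n ^ 2 - n →
      A = fun (i j : Fin n) => decide ((i : ℕ) + (j : ℕ) ≠ n - 1) :=
  stmt13_general n
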